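/- There exists a nonempty compact set C_0 ⊆ Q = [-1,1]^d with 0 ∈ C_0 whose tangent collection at the origin is exactly 𝒦_0^+: Tan(C_0, 0) = 𝒦_0^+. -/

import Mathlib

open Metric Set Filter Topology

noncomputable section

/-- `d`-dimensional Euclidean space. -/
abbrev Euc (d : ℕ) := EuclideanSpace ℝ (Fin d)

/-- The cube `Q = [-1,1]^d`. -/
def cube (d : ℕ) : Set (Euc d) := {x | ∀ i, x i ∈ Set.Icc (-1 : ℝ) 1}

/-- `K ∈ 𝒦`: `K` is a nonempty compact subset of the cube `Q = [-1,1]^d`. -/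
def IsKSet (d : ℕ) (K : Set (Euc d)) : Prop :=
  K.Nonempty ∧ IsCompact K ∧ K ⊆ cube d

/-- The collection `𝒦` of nonempty compact subsets of `Q`. -/
def KColl (d : ℕ) : Set (Set (Euc d)) := {K | IsKSet d K}

/-- The zooming map `T_{x,t}(A) = {(y - x)/t : y ∈ A} ∩ Q`. -/
def zoom (d : ℕ) (x : Euc d) (t : ℝ) (A : Set (Euc d)) : Set (Euc d) :=
  ((fun y => t⁻¹ • (y - x)) '' A) ∩ cube d

/-- `F` is a tangent set of `A` at `x`: `F ∈ 𝒦` and `T_{x,t_n}(A) → F` in the Hausdorff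
distance for some sequence `t_n ↓ 0`. -/
def IsTangentSet (d : ℕ) (A : Set (Euc d)) (x : Euc d) (F : Set (Euc d)) : Prop :=
  IsKSet d F ∧ ∃ t : ℕ → ℝ, (∀ n, 0 < t n) ∧ StrictAnti t ∧ Tendsto t atTop (nhds 0) ∧
    Tendsto (fun n => hausdorffDist (zoom d x (t n) A) F) atTop (nhds 0)

/-- `Tan(A, x)`: the collection of all tangent sets of `A` at `x`. -/
def Tangents (d : ℕ) (A : Set (Euc d)) (x : Euc d) : Set (Set (Euc d)) :=
  {F | IsTangentSet d A x F}

/-- The relation `𝒜 ≲ ℬ`: there is `λ₀ > 0` such that every `A ∈ 𝒜` has, after a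
translation-and-rescaling with ratio `λ ∈ (λ₀, λ₀⁻¹)`, a matching set in `ℬ`:
`λ(A - a) = B - b` for some `B ∈ ℬ`, `a ∈ A`, `b ∈ B`. -/
def SubColl (d : ℕ) (𝒜 ℬ : Set (Set (Euc d))) : Prop :=
  ∃ lam0 : ℝ, 0 < lam0 ∧ ∀ A ∈ 𝒜, ∃ B ∈ ℬ, ∃ lam : ℝ, lam0 < lam ∧ lam < lam0⁻¹ ∧
    ∃ a ∈ A, ∃ b ∈ B, (fun y => lam • (y - a)) '' A = (fun y => y - b) '' B

/-- The equivalence `𝒜 ≈ ℬ`, i.e. `𝒜 ≲ ℬ` and `ℬ ≲ 𝒜`. -/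
def ApproxColl (d : ℕ) (𝒜 ℬ : Set (Set (Euc d))) : Prop :=
  SubColl d 𝒜 ℬ ∧ SubColl d ℬ 𝒜

/-- `E` is locally rich: `Tan(E,x) ≈ 𝒦` for every `x ∈ E`. -/
def LocallyRich (d : ℕ) (A : Set (Euc d)) : Prop :=
  ∀ x ∈ A, ApproxColl d (Tangents d A x) (KColl d)

/-- `𝒦₀`: the nonempty compact subsets of `Q` containing the origin. -/
def KColl0 (d : ℕ) : Set (Set (Euc d)) := {K | IsKSet d K ∧ (0 : Euc d) ∈ K}

/-- `𝒦₀⁺`: the nonempty compact subsets of `Q` containing the origin and contained in the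
half-space where the first coordinate is nonnegative. -/
def KColl0plus (d : ℕ) (hd : 0 < d) : Set (Set (Euc d)) :=
  {K | IsKSet d K ∧ (0 : Euc d) ∈ K ∧ ∀ x ∈ K, 0 ≤ x ⟨0, hd⟩}

namespace TangentAux

def prodSeq (f : ℕ → ℝ) : ℕ → ℝ
  | 0 => 1
  | n + 1 => prodSeq f n * f n

lemma zero_mem_cube (d : ℕ) : (0 : Euc d) ∈ cube d := by intro i; simp

lemma norm_le_of_mem_cube {d : ℕ} {x : Euc d} (hx : x ∈ cube d) : ‖x‖ ≤ Real.sqrt d := by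
  rw [EuclideanSpace.norm_eq]
  apply Real.sqrt_le_sqrt
  calc (∑ i, ‖x i‖ ^ 2) ≤ ∑ _i : Fin d, (1:ℝ) := by
        apply Finset.sum_le_sum
        intro i _
        have h := hx i
        rw [Set.mem_Icc] at h
        have h1 : ‖x i‖ ≤ 1 := by rw [Real.norm_eq_abs]; exact abs_le.2 h
        nlinarith [norm_nonneg (x i)]
    _ = d := by simp

lemma smul_mem_cube {d : ℕ} {c : ℝ} (hc : |c| ≤ 1) {x : Euc d} (hx : x ∈ cube d) :
    c • x ∈ cube d := by
  intro i
  have h := hx i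
  rw [Set.mem_Icc] at h ⊢
  have : |(c • x) i| ≤ 1 := by
    rw [PiLp.smul_apply, smul_eq_mul, abs_mul]
    calc |c| * |x i| ≤ 1 * 1 := mul_le_mul hc (abs_le.2 h) (abs_nonneg _) zero_le_one
      _ = 1 := one_mul 1
  exact abs_le.1 this

end TangentAux

open TangentAux TopologicalSpace in
set_option maxHeartbeats 1000000 in
/-- There exists a compact set `C₀ ⊆ Q` containing the origin whose collection of tangent
sets at the origin is exactly `𝒦₀⁺`. -/
theorem exists_tangents_at_zero_eq_KColl0plus (d : ℕ) (hd : 0 < d) :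
    ∃ C0 : Set (Euc d), IsKSet d C0 ∧ (0 : Euc d) ∈ C0 ∧
      Tangents d C0 0 = KColl0plus d hd := by
  classical
  -- the constant `√d`
  set Cd : ℝ := Real.sqrt d with hCdDef
  have hCd1 : 1 ≤ Cd := by
    rw [hCdDef, show (1:ℝ) = Real.sqrt 1 by simp]
    exact Real.sqrt_le_sqrt (by exact_mod_cast hd)
  have hCd0 : (0:ℝ) < Cd := lt_of_lt_of_le one_pos hCd1
  have hcube_ball : cube d ⊆ closedBall (0 : Euc d) Cd := by
    intro x hx
    rw [mem_closedBall, dist_zero_right]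
    exact norm_le_of_mem_cube hx
  -- a dense sequence in `𝒦₀⁺` viewed inside `NonemptyCompacts (Euc d)`
  let S : Set (NonemptyCompacts (Euc d)) :=
    {K | (K : Set (Euc d)) ⊆ cube d ∧ (0 : Euc d) ∈ (K : Set (Euc d)) ∧
      ∀ x ∈ (K : Set (Euc d)), 0 ≤ x ⟨0, hd⟩}
  have hS0 : (⟨⟨{0}, isCompact_singleton⟩, Set.singleton_nonempty 0⟩ :
      NonemptyCompacts (Euc d)) ∈ S := by
    refine ⟨?_, rfl, ?_⟩
    · intro x hx
      rw [show x = 0 from hx]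
      exact zero_mem_cube d
    · intro x hx
      rw [show x = 0 from hx]
      simp
  haveI : Nonempty ↥S := ⟨⟨_, hS0⟩⟩
  obtain ⟨u, hu⟩ := TopologicalSpace.exists_dense_seq ↥S
  set Kn : ℕ → Set (Euc d) :=
    fun n => (((u (Nat.unpair n).1 : NonemptyCompacts (Euc d))) : Set (Euc d)) with hKndef
  have hKcube : ∀ n, Kn n ⊆ cube d := fun n => (u (Nat.unpair n).1).2.1
  have hK0 : ∀ n, (0:Euc d) ∈ Kn n := fun n => (u (Nat.unpair n).1).2.2.1
  have hKhalf : ∀ n, ∀ x ∈ Kn n, 0 ≤ x ⟨0, hd⟩ := fun n => (u (Nat.unpair n).1).2.2.2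
  have hKcomp : ∀ n, IsCompact (Kn n) := fun n => (u (Nat.unpair n).1).1.isCompact
  -- the scale sequence
  set ρ : ℕ → ℝ := fun n => (2⁻¹ : ℝ) ^ n with hρdef
  have hρpos : ∀ n, 0 < ρ n := fun n => by positivity
  have hρle : ∀ n, ρ n ≤ 1 := fun n => pow_le_one₀ (by norm_num) (by norm_num)
  set f : ℕ → ℝ := fun n => ρ n * (2⁻¹:ℝ) ^ (n+1) * (2 * Cd)⁻¹ with hfdef
  set s : ℕ → ℝ := prodSeq f with hsdef
  have hf_pos : ∀ n, 0 < f n := fun n => by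
    have := hρpos n; positivity
  have hf_le : ∀ n, f n ≤ 2⁻¹ ^ (n+1) := by
    intro n
    have h1 : ρ n * (2⁻¹:ℝ)^(n+1) ≤ (2⁻¹:ℝ)^(n+1) := by
      nlinarith [hρpos n, hρle n, pow_pos (show (0:ℝ) < 2⁻¹ by norm_num) (n+1)]
    have h2 : (2*Cd)⁻¹ ≤ 1 := by
      rw [inv_le_one_iff₀]; right; linarith
    calc f n = (ρ n * 2⁻¹^(n+1)) * (2*Cd)⁻¹ := rfl
      _ ≤ 2⁻¹^(n+1) * 1 := mul_le_mul h1 h2 (by positivity) (by positivity)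
      _ = 2⁻¹^(n+1) := mul_one _
  have hpow_half : ∀ n : ℕ, (2⁻¹:ℝ)^(n+1) ≤ 2⁻¹ := by
    intro n
    have := pow_le_pow_of_le_one (show (0:ℝ) ≤ 2⁻¹ by norm_num)
      (show (2⁻¹:ℝ) ≤ 1 by norm_num) (Nat.one_le_iff_ne_zero.2 (Nat.succ_ne_zero n))
    simpa using this
  have hf_half : ∀ n, f n ≤ 2⁻¹ := fun n => (hf_le n).trans (hpow_half n)
  have hs_succ : ∀ n, s (n+1) = s n * f n := fun n => rfl
  have hs_pos : ∀ n, 0 < s n := by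
    intro n; induction n with
    | zero => norm_num [hsdef, prodSeq]
    | succ n ih => rw [hs_succ]; exact mul_pos ih (hf_pos n)
  have hs_le : ∀ n, s n ≤ 2⁻¹ ^ n := by
    intro n; induction n with
    | zero => norm_num [hsdef, prodSeq]
    | succ n ih =>
      rw [hs_succ, pow_succ]
      exact mul_le_mul ih (hf_half n) (hf_pos n).le (by positivity)
  have hs_le_one : ∀ n, s n ≤ 1 := fun n =>
    (hs_le n).trans (pow_le_one₀ (by norm_num) (by norm_num))
  have hs_anti : StrictAnti s := by
    apply strictAnti_nat_of_succ_lt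
    intro n
    rw [hs_succ]
    nlinarith [hs_pos n, hf_half n, hf_pos n]
  have hs_tendsto : Tendsto s atTop (nhds 0) :=
    squeeze_zero (fun n => (hs_pos n).le) hs_le
      (tendsto_pow_atTop_nhds_zero_of_lt_one (by norm_num) (by norm_num))
  have hs_succ_le : ∀ n, s (n+1) ≤ s n * 2⁻¹ ^ (n+1) := fun n => by
    rw [hs_succ]
    exact mul_le_mul_of_nonneg_left (hf_le n) (hs_pos n).le
  have hs_key : ∀ m n, m < n → s n * Cd < s m * ρ m := by
    intro m n h
    have h1 : s n ≤ s (m+1) := hs_anti.antitone h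
    have h2 : s (m+1) * Cd < s m * ρ m := by
      rw [hs_succ, hfdef]
      have hinv : (2*Cd)⁻¹ * Cd = 2⁻¹ := by field_simp
      calc s m * (ρ m * 2⁻¹^(m+1) * (2*Cd)⁻¹) * Cd
          = s m * ρ m * (2⁻¹^(m+1) * ((2*Cd)⁻¹ * Cd)) := by ring
        _ = s m * ρ m * (2⁻¹^(m+1) * 2⁻¹) := by rw [hinv]
        _ < s m * ρ m * 1 := by
            apply mul_lt_mul_of_pos_left _ (mul_pos (hs_pos m) (hρpos m))
            nlinarith [pow_pos (show (0:ℝ) < 2⁻¹ by norm_num) (m+1), hpow_half m]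
        _ = s m * ρ m := mul_one _
    nlinarith [hs_pos n, hs_pos (m+1)]
  -- the pruned sets `G n` and the candidate set `C0`
  set G : ℕ → Set (Euc d) := fun n => {0} ∪ {y | y ∈ Kn n ∧ ρ n ≤ ‖y‖} with hGdef
  have hG0 : ∀ n, (0:Euc d) ∈ G n := fun n => Or.inl rfl
  have hGK : ∀ n, G n ⊆ Kn n := by
    rintro n y (rfl | ⟨h, _⟩)
    · exact hK0 n
    · exact h
  have hGcube : ∀ n, G n ⊆ cube d := fun n => (hGK n).trans (hKcube n)
  have hGnorm : ∀ n, ∀ y ∈ G n, y ≠ 0 → ρ n ≤ ‖y‖ := by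
    rintro n y (rfl | ⟨_, h⟩) hy0
    · exact absurd rfl hy0
    · exact h
  have hGcomp : ∀ n, IsCompact (G n) := by
    intro n
    apply isCompact_singleton.union
    have : {y | y ∈ Kn n ∧ ρ n ≤ ‖y‖} = Kn n ∩ {y | ρ n ≤ ‖y‖} := rfl
    rw [this]
    exact (hKcomp n).inter_right (isClosed_le continuous_const continuous_norm)
  set C0 : Set (Euc d) := ⋃ n, (fun y => s n • y) '' G n with hC0def
  have h0C0 : (0:Euc d) ∈ C0 := mem_iUnion.2 ⟨0, ⟨0, hG0 0, smul_zero _⟩⟩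
  have hC0cube : C0 ⊆ cube d := by
    rintro x hx
    rw [hC0def, mem_iUnion] at hx
    obtain ⟨n, y, hy, rfl⟩ := hx
    apply smul_mem_cube _ (hGcube n hy)
    rw [abs_of_pos (hs_pos n)]
    exact hs_le_one n
  have hC0half : ∀ x ∈ C0, 0 ≤ x ⟨0, hd⟩ := by
    intro x hx
    rw [hC0def, mem_iUnion] at hx
    obtain ⟨n, y, hy, rfl⟩ := hx
    show 0 ≤ (s n • y) ⟨0, hd⟩
    rw [PiLp.smul_apply, smul_eq_mul]
    exact mul_nonneg (hs_pos n).le (hKhalf n y (hGK n hy))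
  -- compactness of `C0`
  have hrep : C0 = ⋂ N, ((⋃ n ∈ Finset.range N, (fun y => s n • y) '' G n) ∪
      closedBall (0:Euc d) (Cd * s N)) := by
    apply Set.Subset.antisymm
    · intro x hx
      rw [hC0def, mem_iUnion] at hx
      obtain ⟨n, y, hy, rfl⟩ := hx
      rw [mem_iInter]
      intro N
      by_cases h : n < N
      · left
        exact mem_biUnion (Finset.mem_range.2 h) ⟨y, hy, rfl⟩
      · right
        rw [mem_closedBall, dist_zero_right, norm_smul, Real.norm_eq_abs,
          abs_of_pos (hs_pos n)]
        have h1 : ‖y‖ ≤ Cd := norm_le_of_mem_cube (hGcube n hy)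
        have h2 : s n ≤ s N := hs_anti.antitone (Nat.le_of_not_lt h)
        nlinarith [hs_pos n, hs_pos N, norm_nonneg y]
    · intro x hx
      rw [mem_iInter] at hx
      by_contra hxC0
      have hball : ∀ N, x ∈ closedBall (0:Euc d) (Cd * s N) := by
        intro N
        rcases hx N with h | h
        · exfalso
          apply hxC0
          rw [hC0def, mem_iUnion]
          obtain ⟨n, _, hn⟩ := mem_iUnion₂.1 h
          exact ⟨n, hn⟩
        · exact h
      have hx0 : x = 0 := by
        have h1 : ∀ N, ‖x‖ ≤ Cd * s N := by
          intro N
          have := hball N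
          rwa [mem_closedBall, dist_zero_right] at this
        have h2 : Tendsto (fun N => Cd * s N) atTop (nhds 0) := by
          simpa using hs_tendsto.const_mul Cd
        have h3 : ‖x‖ ≤ 0 := ge_of_tendsto h2 (Eventually.of_forall h1)
        simpa using le_antisymm h3 (norm_nonneg x)
      exact hxC0 (hx0 ▸ h0C0)
  have hC0comp : IsCompact C0 := by
    rw [hrep]
    apply Metric.isCompact_of_isClosed_isBounded
    · apply isClosed_iInter
      intro N
      apply IsClosed.union
      · apply Set.Finite.isClosed_biUnion (Finset.finite_toSet _)
        intro n _
        exact ((hGcomp n).image (continuous_const_smul (s n))).isClosed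
      · exact Metric.isClosed_closedBall
    · apply Bornology.IsBounded.subset (isBounded_closedBall (x := (0:Euc d)) (r := Cd * s 0 + Cd))
      intro x hx
      rw [mem_iInter] at hx
      rcases hx 0 with h | h
      · simp at h
      · exact closedBall_subset_closedBall (by nlinarith [hs_pos 0, hs_le_one 0]) h
  -- zoom basics
  have hzoom_mem : ∀ t : ℝ, ∀ x, x ∈ zoom d 0 t C0 ↔
      (∃ z ∈ C0, t⁻¹ • z = x) ∧ x ∈ cube d := by
    intro t x
    unfold zoom
    simp [sub_zero]
  have h0zoom : ∀ t : ℝ, (0:Euc d) ∈ zoom d 0 t C0 := by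
    intro t
    rw [hzoom_mem]
    exact ⟨⟨0, h0C0, smul_zero _⟩, zero_mem_cube d⟩
  have hzoom_cube : ∀ t : ℝ, zoom d 0 t C0 ⊆ cube d := fun t => inter_subset_right
  have hzoom_bounded : ∀ t : ℝ, Bornology.IsBounded (zoom d 0 t C0) := fun t =>
    (isBounded_closedBall (x := (0:Euc d)) (r := Cd)).subset ((hzoom_cube t).trans hcube_ball)
  -- main zoom estimate
  have hmain : ∀ n, hausdorffDist (zoom d 0 (s n) C0) (Kn n) ≤ Cd * 2⁻¹ ^ n := by
    intro n
    have hb : (0:ℝ) ≤ Cd * 2⁻¹ ^ n := by positivity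
    apply hausdorffDist_le_of_infDist hb
    · intro x hx
      rw [hzoom_mem] at hx
      obtain ⟨⟨z, hz, rfl⟩, hxcube⟩ := hx
      rw [hC0def, mem_iUnion] at hz
      obtain ⟨m, y, hy, rfl⟩ := hz
      have hsm : (s n)⁻¹ • (s m • y) = (s m / s n) • y := by
        rw [smul_smul, div_eq_inv_mul]
      rcases lt_trichotomy m n with h | rfl | h
      · by_cases hy0 : y = 0
        · subst hy0
          simp only [smul_zero]
          rw [infDist_zero_of_mem (hK0 n)]
          exact hb
        · exfalso
          have hxnorm : ‖(s n)⁻¹ • (s m • y)‖ ≤ Cd := norm_le_of_mem_cube hxcube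
          rw [hsm, norm_smul, Real.norm_eq_abs,
            abs_of_pos (div_pos (hs_pos m) (hs_pos n))] at hxnorm
          have h1 : ρ m ≤ ‖y‖ := hGnorm m y hy hy0
          have h2 : s n * Cd < s m * ρ m := hs_key m n h
          have h3 : s m / s n * ρ m ≤ s m / s n * ‖y‖ :=
            mul_le_mul_of_nonneg_left h1 (div_pos (hs_pos m) (hs_pos n)).le
          have h4 : Cd < s m / s n * ρ m := by
            rw [div_mul_eq_mul_div, lt_div_iff₀ (hs_pos n)]
            nlinarith [hs_pos n]
          linarith
      · have : (s m)⁻¹ • (s m • y) = y := by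
          rw [smul_smul, inv_mul_cancel₀ (ne_of_gt (hs_pos m)), one_smul]
        rw [this, infDist_zero_of_mem (hGK m hy)]
        exact hb
      · have h1 : infDist ((s n)⁻¹ • (s m • y)) (Kn n) ≤ ‖(s n)⁻¹ • (s m • y)‖ := by
          have := infDist_le_dist_of_mem (x := (s n)⁻¹ • (s m • y)) (hK0 n)
          rwa [dist_zero_right] at this
        apply h1.trans
        rw [hsm, norm_smul, Real.norm_eq_abs, abs_of_pos (div_pos (hs_pos m) (hs_pos n))]
        have h2 : ‖y‖ ≤ Cd := norm_le_of_mem_cube (hGcube m hy)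
        have h3 : s m ≤ s (n+1) := hs_anti.antitone h
        have h4 : s m / s n ≤ 2⁻¹ ^ (n+1) := by
          rw [div_le_iff₀ (hs_pos n)]
          calc s m ≤ s (n+1) := h3
            _ ≤ s n * 2⁻¹^(n+1) := hs_succ_le n
            _ = 2⁻¹^(n+1) * s n := mul_comm _ _
        have h5 : (2⁻¹:ℝ)^(n+1) ≤ 2⁻¹^n := by
          rw [pow_succ]
          nlinarith [pow_pos (show (0:ℝ) < 2⁻¹ by norm_num) n]
        calc s m / s n * ‖y‖ ≤ 2⁻¹^(n+1) * Cd := by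
              apply mul_le_mul h4 h2 (norm_nonneg y) (by positivity)
          _ ≤ 2⁻¹^n * Cd := by nlinarith
          _ = Cd * 2⁻¹^n := mul_comm _ _
    · intro y hy
      by_cases h : ρ n ≤ ‖y‖
      · have hyG : y ∈ G n := Or.inr ⟨hy, h⟩
        have hyZ : y ∈ zoom d 0 (s n) C0 := by
          rw [hzoom_mem]
          refine ⟨⟨s n • y, mem_iUnion.2 ⟨n, y, hyG, rfl⟩, ?_⟩, hKcube n hy⟩
          rw [smul_smul, inv_mul_cancel₀ (ne_of_gt (hs_pos n)), one_smul]
        rw [infDist_zero_of_mem hyZ]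
        exact hb
      · have h1 : infDist y (zoom d 0 (s n) C0) ≤ ‖y‖ := by
          have := infDist_le_dist_of_mem (x := y) (h0zoom (s n))
          rwa [dist_zero_right] at this
        apply h1.trans
        push_neg at h
        calc ‖y‖ ≤ ρ n := h.le
          _ = 1 * 2⁻¹^n := (one_mul _).symm
          _ ≤ Cd * 2⁻¹^n := by nlinarith [pow_pos (show (0:ℝ) < 2⁻¹ by norm_num) n]
  -- conclusion
  refine ⟨C0, ⟨⟨0, h0C0⟩, hC0comp, hC0cube⟩, h0C0, ?_⟩
  ext F
  simp only [Tangents, IsTangentSet, KColl0plus, mem_setOf_eq]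
  constructor
  · rintro ⟨hFK, t, htpos, _, _, hdlim⟩
    have hZne : ∀ k, (zoom d 0 (t k) C0).Nonempty := fun k => ⟨0, h0zoom _⟩
    have hfin : ∀ k, EMetric.hausdorffEdist (zoom d 0 (t k) C0) F ≠ ⊤ := fun k =>
      hausdorffEdist_ne_top_of_nonempty_of_bounded (hZne k) hFK.1 (hzoom_bounded _)
        hFK.2.1.isBounded
    refine ⟨hFK, ?_, ?_⟩
    · have h1 : ∀ k, infDist 0 F ≤ hausdorffDist (zoom d 0 (t k) C0) F := fun k =>
        infDist_le_hausdorffDist_of_mem (h0zoom _) (hfin k)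
      have h2 : infDist 0 F ≤ 0 := ge_of_tendsto hdlim (Eventually.of_forall h1)
      exact (hFK.2.1.isClosed.mem_iff_infDist_zero hFK.1).2
        (le_antisymm h2 infDist_nonneg)
    · intro x hx
      set Hs : Set (Euc d) := {z | 0 ≤ z ⟨0, hd⟩} with hHsdef
      have hHsclosed : IsClosed Hs :=
        isClosed_le continuous_const (EuclideanSpace.proj (⟨0, hd⟩ : Fin d)).continuous
      have hHsne : Hs.Nonempty := ⟨0, by simp [hHsdef]⟩
      have hzoomHs : ∀ k, zoom d 0 (t k) C0 ⊆ Hs := by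
        intro k z hz
        rw [hzoom_mem] at hz
        obtain ⟨⟨w, hw, rfl⟩, _⟩ := hz
        show 0 ≤ ((t k)⁻¹ • w) ⟨0, hd⟩
        rw [PiLp.smul_apply, smul_eq_mul]
        exact mul_nonneg (inv_nonneg.2 (htpos k).le) (hC0half w hw)
      have h1 : ∀ k, infDist x Hs ≤ hausdorffDist (zoom d 0 (t k) C0) F := by
        intro k
        calc infDist x Hs ≤ infDist x (zoom d 0 (t k) C0) :=
              infDist_le_infDist_of_subset (hzoomHs k) (hZne k)
          _ ≤ hausdorffDist F (zoom d 0 (t k) C0) :=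
              infDist_le_hausdorffDist_of_mem hx
                (by rw [EMetric.hausdorffEdist_comm]; exact hfin k)
          _ = hausdorffDist (zoom d 0 (t k) C0) F := hausdorffDist_comm
      have h2 : infDist x Hs ≤ 0 := ge_of_tendsto hdlim (Eventually.of_forall h1)
      have := (hHsclosed.mem_iff_infDist_zero hHsne).2 (le_antisymm h2 infDist_nonneg)
      exact this
  · rintro ⟨hFK, hF0, hFhalf⟩
    refine ⟨hFK, ?_⟩
    have hFS : (⟨⟨F, hFK.2.1⟩, hFK.1⟩ : NonemptyCompacts (Euc d)) ∈ S :=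
      ⟨hFK.2.2, hF0, hFhalf⟩
    have hex : ∀ j : ℕ, ∃ m,
        dist (⟨⟨⟨F, hFK.2.1⟩, hFK.1⟩, hFS⟩ : ↥S) (u m) < 1/((j:ℝ)+1) := by
      intro j
      exact (Metric.denseRange_iff.1 hu) _ _ (by positivity)
    choose i hi using hex
    set nn : ℕ → ℕ :=
      fun j => Nat.rec (Nat.pair (i 0) 0) (fun j prev => Nat.pair (i (j+1)) (prev+1)) j
      with hnndef
    have hnn_unpair : ∀ j, (Nat.unpair (nn j)).1 = i j := by
      intro j
      cases j with
      | zero => simp [hnndef]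
      | succ j => simp [hnndef]
    have hnn_mono : StrictMono nn := by
      apply strictMono_nat_of_lt_succ
      intro j
      calc nn j < nn j + 1 := Nat.lt_succ_self _
        _ ≤ Nat.pair (i (j+1)) (nn j + 1) := Nat.right_le_pair _ _
        _ = nn (j+1) := rfl
    have hnn_ge : ∀ j, j ≤ nn j := fun j => hnn_mono.le_apply
    have hKnj : ∀ j, Kn (nn j) = ((u (i j) : NonemptyCompacts (Euc d)) : Set (Euc d)) := by
      intro j
      rw [hKndef]
      simp only [hnn_unpair j]
    refine ⟨fun j => s (nn j), fun j => hs_pos _, ?_, ?_, ?_⟩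
    · intro a b hab
      exact hs_anti (hnn_mono hab)
    · exact hs_tendsto.comp hnn_mono.tendsto_atTop
    · apply squeeze_zero (g := fun j : ℕ => Cd * 2⁻¹^j + 1/((j:ℝ)+1))
        (fun j => hausdorffDist_nonneg)
      · intro j
        have hKnF : hausdorffDist (Kn (nn j)) F < 1/((j:ℝ)+1) := by
          have h := hi j
          rw [Subtype.dist_eq, NonemptyCompacts.dist_eq] at h
          rw [hKnj j, hausdorffDist_comm]
          exact h
        have hfin2 : EMetric.hausdorffEdist (zoom d 0 (s (nn j)) C0) (Kn (nn j)) ≠ ⊤ :=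
          hausdorffEdist_ne_top_of_nonempty_of_bounded ⟨0, h0zoom _⟩ ⟨0, hK0 _⟩
            (hzoom_bounded _)
            ((isBounded_closedBall (x := (0:Euc d)) (r := Cd)).subset
              ((hKcube _).trans hcube_ball))
        have hmono : (2⁻¹:ℝ)^(nn j) ≤ 2⁻¹^j :=
          pow_le_pow_of_le_one (by norm_num) (by norm_num) (hnn_ge j)
        calc hausdorffDist (zoom d 0 (s (nn j)) C0) F
            ≤ hausdorffDist (zoom d 0 (s (nn j)) C0) (Kn (nn j)) +
              hausdorffDist (Kn (nn j)) F := hausdorffDist_triangle hfin2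
          _ ≤ Cd * 2⁻¹^(nn j) + 1/((j:ℝ)+1) := add_le_add (hmain _) hKnF.le
          _ ≤ Cd * 2⁻¹^j + 1/((j:ℝ)+1) := by
              have : Cd * 2⁻¹^(nn j) ≤ Cd * 2⁻¹^j :=
                mul_le_mul_of_nonneg_left hmono hCd0.le
              linarith
      · have h1 : Tendsto (fun j:ℕ => Cd * 2⁻¹^j) atTop (nhds 0) := by
          simpa using (tendsto_pow_atTop_nhds_zero_of_lt_one
            (show (0:ℝ) ≤ 2⁻¹ by norm_num) (show (2⁻¹:ℝ) < 1 by norm_num)).const_mul Cd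
        have h2 : Tendsto (fun j:ℕ => 1/((j:ℝ)+1)) atTop (nhds 0) :=
          tendsto_one_div_add_atTop_nhds_zero_nat
        simpa using h1.add h2

end
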